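/- arXiv:2205.02430 — 7 statements merged into one kernel-verified Lean document; each statement's English description precedes it below -/
import Mathlib

section
/- If random variables T_0, T_1, ..., T_B are exchangeable, then the p-value p = (1/(B+1)) * (1 + #{b in {1,...,B} : T_b >= T_0}) satisfies P(p <= alpha) <= alpha for all alpha in [0,1]. -/
/-!
The p-value is `rankCount T 0 / (B + 1)`, so `p ≤ α` iff `rankCount T 0 ≤ k := ⌊α (B + 1)⌋₊`.
For a fixed vector `t`, at most `k` coordinates have `rankCount t i ≤ k`: each of them is `≥` the
smallest of them, `i₀`, so all are counted by `rankCount t i₀ ≤ k`. By exchangeability the events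
`rankCount T i ≤ k` have equal probability, and their indicators sum to at most `k`, so each has
probability at most `k / (B + 1) ≤ α`.
-/

open MeasureTheory Finset
open scoped ENNReal

def rankCount {ι α : Type*} [Fintype ι] [LinearOrder α] (t : ι → α) (i : ι) : ℕ :=
  #{b | t i ≤ t b}

section Rank

variable {ι α : Type*} [Fintype ι] [LinearOrder α]

theorem card_rankCount_le_le (t : ι → α) (k : ℕ) : #{i | rankCount t i ≤ k} ≤ k := by
  rcases (univ.filter fun i => rankCount t i ≤ k).eq_empty_or_nonempty with hS | hS
  · simp [hS]
  obtain ⟨i, hi, hmin⟩ := exists_min_image _ t hS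
  calc #{i | rankCount t i ≤ k} ≤ rankCount t i :=
        card_le_card fun b hb => mem_filter.2 ⟨mem_univ b, hmin b hb⟩
    _ ≤ k := (mem_filter.1 hi).2

theorem rankCount_comp_perm (t : ι → α) (σ : Equiv.Perm ι) (i : ι) :
    rankCount (fun b => t (σ b)) i = rankCount t (σ i) :=
  card_equiv σ (by simp)

theorem rankCount_eq_card_ne_add_one [DecidableEq ι] (t : ι → α) (i : ι) :
    rankCount t i = #{b | b ≠ i ∧ t i ≤ t b} + 1 := by
  rw [rankCount, ← card_erase_add_one (a := i) (by simp), ← filter_erase, ← filter_ne',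
    filter_filter]

end Rank

theorem measurable_rankCount {ι : Type*} [Fintype ι] (i : ι) :
    Measurable fun t : ι → ℝ => rankCount t i := by
  simp only [rankCount, card_filter]
  exact Finset.measurable_sum _ fun b _ =>
    Measurable.ite (measurableSet_le (measurable_pi_apply i) (measurable_pi_apply b))
      measurable_const measurable_const

theorem sum_measure_le_of_forall_card_mem_le {Ω ι : Type*} [MeasurableSpace Ω] [Fintype ι]
    (μ : Measure Ω) {A : ι → Set Ω} [∀ ω, DecidablePred (ω ∈ A ·)]
    (hA : ∀ i, MeasurableSet (A i)) {k : ℕ}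
    (hk : ∀ ω, #{i | ω ∈ A i} ≤ k) : ∑ i, μ (A i) ≤ k * μ Set.univ := by
  calc ∑ i, μ (A i) = ∫⁻ ω, ∑ i, (A i).indicator 1 ω ∂μ := by
        rw [lintegral_finsetSum _ fun i _ => measurable_one.indicator (hA i)]
        simp only [lintegral_indicator_one (hA _)]
    _ ≤ ∫⁻ _, (k : ℝ≥0∞) ∂μ := by
        refine lintegral_mono fun ω => ?_
        simp only [Set.indicator_apply, Pi.one_apply, sum_boole]
        exact_mod_cast hk ω
    _ = k * μ Set.univ := lintegral_const _

section Exchangeable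

variable {Ω ι : Type*} [MeasurableSpace Ω] [Fintype ι] {μ : Measure Ω} {X : Ω → ι → ℝ}

theorem measure_rankCount_le_eq (hX : Measurable X)
    (hexch : ∀ σ : Equiv.Perm ι, μ.map (fun ω i => X ω (σ i)) = μ.map X)
    (k : ℕ) (i j : ι) :
    μ {ω | rankCount (X ω) i ≤ k} = μ {ω | rankCount (X ω) j ≤ k} := by
  classical
  have hS : MeasurableSet {t : ι → ℝ | rankCount t i ≤ k} :=
    measurable_rankCount i measurableSet_Iic
  have hXσ : Measurable fun ω b => X ω (Equiv.swap i j b) :=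
    measurable_pi_lambda _ fun b => (measurable_pi_apply _).comp hX
  calc μ {ω | rankCount (X ω) i ≤ k} = μ.map X {t | rankCount t i ≤ k} :=
        (Measure.map_apply hX hS).symm
    _ = μ.map (fun ω b => X ω (Equiv.swap i j b)) {t | rankCount t i ≤ k} := by rw [hexch]
    _ = μ {ω | rankCount (X ω) j ≤ k} := by
        rw [Measure.map_apply hXσ hS]
        simp only [Set.preimage_ofPred_eq, rankCount_comp_perm, Equiv.swap_apply_left]

theorem measureReal_rankCount_le_le [IsProbabilityMeasure μ] (hX : Measurable X)
    (hexch : ∀ σ : Equiv.Perm ι, μ.map (fun ω i => X ω (σ i)) = μ.map X)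
    (k : ℕ) (i : ι) :
    μ.real {ω | rankCount (X ω) i ≤ k} ≤ k / Fintype.card ι := by
  have hmeas : ∀ j, MeasurableSet {ω | rankCount (X ω) j ≤ k} := fun j =>
    (measurable_rankCount j).comp hX measurableSet_Iic
  have hsum : (Fintype.card ι : ℝ≥0∞) * μ {ω | rankCount (X ω) i ≤ k} ≤ k := by
    calc (Fintype.card ι : ℝ≥0∞) * μ {ω | rankCount (X ω) i ≤ k}
        = ∑ j, μ {ω | rankCount (X ω) j ≤ k} := by
          simp [measure_rankCount_le_eq hX hexch k _ i]
      _ ≤ k * μ Set.univ :=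
          sum_measure_le_of_forall_card_mem_le μ hmeas fun ω => card_rankCount_le_le (X ω) k
      _ = k := by simp
  have hcard : (0 : ℝ) < Fintype.card ι := by exact_mod_cast Fintype.card_pos_iff.2 ⟨i⟩
  rw [le_div_iff₀ hcard, mul_comm, measureReal_def]
  simpa using ENNReal.toReal_mono (ENNReal.natCast_ne_top k) hsum

end Exchangeable

/-- If `T_0, T_1, ..., T_B` are exchangeable, then the randomization p-value
`p = (1/(B+1)) (1 + #{b ∈ {1,…,B} : T_b ≥ T_0})` satisfies `P(p ≤ α) ≤ α` for all `α ∈ [0,1]`. -/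
theorem exchangeable_pvalue_valid
    {Ω : Type*} [MeasurableSpace Ω] (μ : Measure Ω) [IsProbabilityMeasure μ]
    (B : ℕ) (T : Fin (B + 1) → Ω → ℝ) (hT : ∀ i, Measurable (T i))
    (hexch : ∀ σ : Equiv.Perm (Fin (B + 1)),
      μ.map (fun ω (i : Fin (B + 1)) => T (σ i) ω) =
        μ.map (fun ω (i : Fin (B + 1)) => T i ω))
    (α : ℝ) (hα : α ∈ Set.Icc (0 : ℝ) 1) :
    (μ {ω | (1 + (((Finset.univ : Finset (Fin (B + 1))).filter
          (fun b => b ≠ 0 ∧ T 0 ω ≤ T b ω)).card : ℝ)) / (B + 1) ≤ α}).toReal ≤ α := by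
  obtain ⟨hα0, -⟩ := hα
  have hB : (0 : ℝ) < B + 1 := by positivity
  set k := ⌊α * (B + 1)⌋₊
  have hevent : ∀ ω, (1 + (#{b | b ≠ 0 ∧ T 0 ω ≤ T b ω} : ℝ)) / (B + 1) ≤ α ↔
      rankCount (fun i => T i ω) 0 ≤ k := fun ω => by
    rw [rankCount_eq_card_ne_add_one, Nat.le_floor_iff (by positivity), div_le_iff₀ hB]
    push_cast
    rw [add_comm]
  simp_rw [hevent, ← measureReal_def]
  calc μ.real {ω | rankCount (fun i => T i ω) 0 ≤ k} ≤ k / (B + 1) := by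
        simpa using measureReal_rankCount_le_le (measurable_pi_lambda _ hT) hexch k 0
    _ ≤ α := (div_le_iff₀ hB).2 (Nat.floor_le (by positivity))
end

section
/- Let (X_1, Z_1, Y_1), ..., (X_n, Z_n, Y_n) be generated by a sequential adaptive sampling procedure where, for each t, (X_t, Z_t) is drawn from a conditional law f_t^A given the history (X_{1:t-1}, Z_{1:t-1}, Y_{1:t-1}) and Y_t is drawn from f_Q(X_t, Z_t). Suppose (null hypothesis) f_Q(x, z) does not depend on x, and suppose the marginal conditional law of Z_t given the history does not depend on X_{1:t-1}. Let tilde{X}_1, ..., tilde{X}_n be resampled sequentially, with tilde{X}_t drawn from the conditional law of X_t given (X_{1:t-1} = tilde{X}_{1:t-1}, Z_{1:t}, Y_{1:t-1}). Then (tilde{X}_{1:n}, Y_{1:n}, Z_{1:n}) has the same joint distribution as (X_{1:n}, Y_{1:n}, Z_{1:n}). -/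
/-!
Under the null hypothesis and Assumption 1, neither `h_t` nor `f_Q` sees `x`, so the joint pmf
factors as `P x z y = C(z, y) * ∏ t, g_t(x, z, y)`. Because each `g_t` only looks at `x_{≤ t}` and
is normalized in `x_t`, the product `∏ t, g_t` sums to `1` over `x` (sum out the last coordinate
first). Hence the `X`-marginal `∑ x, P x z y` is `C(z, y)`, and resampling multiplies it back by
`∏ t, g_t(x̃, z, y)`, which is `P x̃ z y`.
-/

open Finset Function

theorem Fin.sum_prod_eq_one_of_causal {α R : Type*} [Fintype α] [DecidableEq α]
    [CommSemiring R] :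
    ∀ {n : ℕ} [Nonempty (Fin n → α)] (g : Fin n → (Fin n → α) → R),
      (∀ t x x', (∀ s ≤ t, x s = x' s) → g t x = g t x') →
      (∀ t x, ∑ a, g t (update x t a) = 1) → ∑ x, ∏ t, g t x = 1
  | 0, _, _, _, _ => by simp
  | n + 1, _, g, hdep, hsum => by
    obtain ⟨a₀⟩ : Nonempty α := ‹Nonempty (Fin (n + 1) → α)›.map (· (last n))
    have : Nonempty α := ⟨a₀⟩
    have castSucc_of_le : ∀ {t : Fin n} {s : Fin (n + 1)}, s ≤ t.castSucc → ∃ s' : Fin n, s'.castSucc = s :=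
      fun hs => exists_castSucc_eq.2 (ne_last_of_lt (hs.trans_lt (castSucc_lt_last _)))
    set g' : Fin n → (Fin n → α) → R := fun t x => g t.castSucc (snoc x a₀)
    have hg' : ∀ t x a, g t.castSucc (snoc x a) = g' t x := fun t x a =>
      hdep _ _ _ fun s hs => by
        obtain ⟨s, rfl⟩ := castSucc_of_le hs
        simp
    have hdep' : ∀ t x x', (∀ s ≤ t, x s = x' s) → g' t x = g' t x' := fun t x x' hx =>
      hdep _ _ _ fun s hs => by
        obtain ⟨s, rfl⟩ := castSucc_of_le hs
        simpa using hx s (castSucc_le_castSucc_iff.1 hs)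
    have hsum' : ∀ t x, ∑ a, g' t (update x t a) = 1 := fun t x => by
      simpa only [g', snoc_update] using hsum t.castSucc (snoc x a₀)
    have hlast : ∀ x : Fin n → α, ∑ a, g (last n) (snoc x a) = 1 := fun x => by
      simpa only [update_snoc_last] using hsum (last n) (snoc x a₀)
    calc ∑ x, ∏ t, g t x
        = ∑ x : Fin n → α, ∑ a, ∏ t, g t (snoc x a) := by
          rw [← Fintype.sum_equiv (snocEquiv fun _ => α) _ _ fun _ => rfl,
            Fintype.sum_prod_type_right]
          rfl
      _ = ∑ x : Fin n → α, (∏ t, g' t x) * ∑ a, g (last n) (snoc x a) := by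
          simp only [prod_univ_castSucc, hg', mul_sum]
      _ = 1 := by
          simp only [hlast, mul_one]
          exact sum_prod_eq_one_of_causal g' hdep' hsum'

theorem adaptive_resampling_distributional_equality_general
    {𝒳 𝒵 𝒴 : Type*} [Fintype 𝒳] [DecidableEq 𝒳]
    (n : ℕ)
    -- `g t x z y` : conditional pmf value P(X_t = x t | X_{<t} = x_{<t}, Z_{≤t} = z_{≤t}, Y_{<t} = y_{<t})
    (g : Fin n → (Fin n → 𝒳) → (Fin n → 𝒵) → (Fin n → 𝒴) → ℝ)
    -- `h t x z y` : conditional pmf value P(Z_t = z t | X_{<t}, Z_{<t}, Y_{<t})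
    (h : Fin n → (Fin n → 𝒳) → (Fin n → 𝒵) → (Fin n → 𝒴) → ℝ)
    -- `fQ x z y` : pmf value P(Y_t = y | X_t = x, Z_t = z)
    (fQ : 𝒳 → 𝒵 → 𝒴 → ℝ)
    -- dependence structure: `g t` depends only on `x_{≤t}`, `z_{≤t}`, `y_{<t}`
    (hgdep : ∀ t x x' z z' y y', (∀ s, s ≤ t → x s = x' s) → (∀ s, s ≤ t → z s = z' s) →
      (∀ s, s < t → y s = y' s) → g t x z y = g t x' z' y')
    -- Assumption 1: the conditional law of `Z_t` does not depend on the past `X`'s at all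
    (hnoadapt : ∀ t x x' z y, h t x z y = h t x' z y)
    -- the null hypothesis: `f_Q(x, z)` does not depend on `x`
    (hnull : ∀ x x' z y, fQ x z y = fQ x' z y)
    -- nonnegativity and normalization of the conditional pmfs of `X_t`
    (hgsum : ∀ t x z y, ∑ a : 𝒳, g t (Function.update x t a) z y = 1)
    -- joint pmf of the adaptively collected data `(X_{1:n}, Z_{1:n}, Y_{1:n})`
    (P : (Fin n → 𝒳) → (Fin n → 𝒵) → (Fin n → 𝒴) → ℝ)
    (hP : ∀ x z y, P x z y = ∏ t, (h t x z y * g t x z y * fQ (x t) (z t) (y t)))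
    -- joint pmf of `(tilde X_{1:n}, Z_{1:n}, Y_{1:n})` under the natural adaptive resampling
    (Ptil : (Fin n → 𝒳) → (Fin n → 𝒵) → (Fin n → 𝒴) → ℝ)
    (hPtil : ∀ xt z y, Ptil xt z y = (∑ x : Fin n → 𝒳, P x z y) * ∏ t, g t xt z y) :
    ∀ xt z y, Ptil xt z y = P xt z y := by
  intro xt z y
  have : Nonempty (Fin n → 𝒳) := ⟨xt⟩
  have hnorm : ∑ x, ∏ t, g t x z y = 1 :=
    Fin.sum_prod_eq_one_of_causal (fun t x => g t x z y)
      (fun t x x' hx => hgdep t x x' z z y y hx (fun _ _ => rfl) (fun _ _ => rfl))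
      (fun t x => hgsum t x z y)
  have hfactor : ∀ x, P x z y = (∏ t, h t xt z y * fQ (xt t) (z t) (y t)) * ∏ t, g t x z y :=
    fun x => by
      rw [hP, ← prod_mul_distrib]
      refine prod_congr rfl fun t _ => ?_
      rw [hnoadapt t x xt, hnull (x t) (xt t)]
      ring
  rw [hPtil, sum_congr rfl fun x _ => hfactor x, ← mul_sum, hnorm, mul_one, hfactor]

/-- **Theorem 1, distributional equality.** In the discrete sequential adaptive
sampling procedure, where at each time `t` the covariate `Z_t` is drawn from `h_t` (not
depending on past `X`'s, Assumption 1), `X_t` is drawn from `g_t` given the history and the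
current `Z_t`, and `Y_t` is drawn from `f_Q(X_t, Z_t)` which under the null does not depend on
its first argument, the resampled vector `tilde X` obtained by the natural adaptive resampling
procedure satisfies `(tilde X_{1:n}, Y_{1:n}, Z_{1:n}) =d (X_{1:n}, Y_{1:n}, Z_{1:n})`:
the joint pmf `Ptil` of the former equals the joint pmf `P` of the latter. -/
theorem adaptive_resampling_distributional_equality
    {𝒳 𝒵 𝒴 : Type*} [Fintype 𝒳] [Fintype 𝒵] [Fintype 𝒴] [DecidableEq 𝒳]
    (n : ℕ)
    -- `g t x z y` : conditional pmf value P(X_t = x t | X_{<t} = x_{<t}, Z_{≤t} = z_{≤t}, Y_{<t} = y_{<t})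
    (g : Fin n → (Fin n → 𝒳) → (Fin n → 𝒵) → (Fin n → 𝒴) → ℝ)
    -- `h t x z y` : conditional pmf value P(Z_t = z t | X_{<t}, Z_{<t}, Y_{<t})
    (h : Fin n → (Fin n → 𝒳) → (Fin n → 𝒵) → (Fin n → 𝒴) → ℝ)
    -- `fQ x z y` : pmf value P(Y_t = y | X_t = x, Z_t = z)
    (fQ : 𝒳 → 𝒵 → 𝒴 → ℝ)
    -- dependence structure: `g t` depends only on `x_{≤t}`, `z_{≤t}`, `y_{<t}`
    (hgdep : ∀ t x x' z z' y y', (∀ s, s ≤ t → x s = x' s) → (∀ s, s ≤ t → z s = z' s) →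
      (∀ s, s < t → y s = y' s) → g t x z y = g t x' z' y')
    -- dependence structure: `h t` depends only on `x_{<t}`, `z_{≤t}`, `y_{<t}`
    (hhdep : ∀ t x x' z z' y y', (∀ s, s < t → x s = x' s) → (∀ s, s ≤ t → z s = z' s) →
      (∀ s, s < t → y s = y' s) → h t x z y = h t x' z' y')
    -- Assumption 1: the conditional law of `Z_t` does not depend on the past `X`'s at all
    (hnoadapt : ∀ t x x' z y, h t x z y = h t x' z y)
    -- the null hypothesis: `f_Q(x, z)` does not depend on `x`
    (hnull : ∀ x x' z y, fQ x z y = fQ x' z y)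
    -- nonnegativity and normalization of the conditional pmfs of `X_t`
    (hgpos : ∀ t x z y, 0 ≤ g t x z y)
    (hgsum : ∀ t x z y, ∑ a : 𝒳, g t (Function.update x t a) z y = 1)
    -- joint pmf of the adaptively collected data `(X_{1:n}, Z_{1:n}, Y_{1:n})`
    (P : (Fin n → 𝒳) → (Fin n → 𝒵) → (Fin n → 𝒴) → ℝ)
    (hP : ∀ x z y, P x z y = ∏ t, (h t x z y * g t x z y * fQ (x t) (z t) (y t)))
    -- joint pmf of `(tilde X_{1:n}, Z_{1:n}, Y_{1:n})` under the natural adaptive resampling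
    (Ptil : (Fin n → 𝒳) → (Fin n → 𝒵) → (Fin n → 𝒴) → ℝ)
    (hPtil : ∀ xt z y, Ptil xt z y = (∑ x : Fin n → 𝒳, P x z y) * ∏ t, g t xt z y) :
    ∀ xt z y, Ptil xt z y = P xt z y :=
  adaptive_resampling_distributional_equality_general n g h fQ hgdep hnoadapt hnull hgsum P hP Ptil
    hPtil
end

section
/- In the setting of the adaptive randomization test: if, conditionally on (Y_{1:n}, Z_{1:n}), the resampled vector tilde{X}_{1:n} has the same conditional distribution as X_{1:n} and is conditionally independent of X_{1:n}, then for any test statistic T, the collection T(X, Z, Y), T(tilde{X}^1, Z, Y), ..., T(tilde{X}^B, Z, Y) is exchangeable conditionally on (Y, Z), where tilde{X}^1, ..., tilde{X}^B are i.i.d. copies of the resampling conditional on (Y, Z). -/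
/-! Under the product weight `∏ i, p (v i)` the coordinates of `v` are exchangeable:
relabelling them by `σ` preserves the weight and carries the event `∀ i, P (σ i) (v i)` onto
`∀ i, P i (v i)`. -/

open Classical in
theorem Fintype.sum_ite_forall_prod_perm {ι α R : Type*} [Fintype ι] [DecidableEq ι] [Fintype α]
    [CommSemiring R] (p : α → R) (P : ι → α → Prop) (σ : Equiv.Perm ι) :
    (∑ v : ι → α, if (∀ i, P i (v i)) then ∏ i, p (v i) else 0)
      = ∑ v : ι → α, if (∀ i, P (σ i) (v i)) then ∏ i, p (v i) else 0 := by
  refine Fintype.sum_equiv (Equiv.arrowCongr σ.symm (Equiv.refl α)) _ _ fun v => ?_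
  have hevent : (∀ i, P (σ i) (v (σ i))) ↔ ∀ i, P i (v i) :=
    ⟨fun h i => by simpa using h (σ.symm i), fun h i => h (σ i)⟩
  have hweight : ∏ i, p (v (σ i)) = ∏ i, p (v i) := Equiv.prod_comp σ fun i => p (v i)
  simp [Function.comp_def, hevent, hweight]

open Classical in
theorem resampled_statistics_conditionally_exchangeable_general
    {α γ : Type*} [Fintype α] (B : ℕ)
    (q : γ → α → ℝ)
    (T : α → γ → ℝ) (b : γ) (σ : Equiv.Perm (Fin (B + 1))) (w : Fin (B + 1) → ℝ) :
    (∑ v : Fin (B + 1) → α,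
        if (∀ i, T (v i) b = w i) then ∏ i, q b (v i) else 0)
      = ∑ v : Fin (B + 1) → α,
        if (∀ i, T (v i) b = w (σ i)) then ∏ i, q b (v i) else 0 := by
  convert Fintype.sum_ite_forall_prod_perm (q b) (fun i a => T a b = w i) σ

open Classical in
/-- Conditionally on `(Y,Z) = b`, if the resamples `tilde X¹, …, tilde X^B`
are i.i.d. draws from the conditional pmf `q b` of `X` given `(Y,Z) = b`, and are conditionally
independent of `X` (so that the vector `v = (X, tilde X¹, …, tilde X^B)` has conditional joint
pmf `∏ i, q b (v i)`), then for any test statistic `T` the collection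
`(T(X,b), T(tilde X¹,b), …, T(tilde X^B,b))` is exchangeable given `(Y,Z) = b`: for every
permutation `σ` and every vector of values `w`, the conditional probability that the
`T`-vector equals `w` is the same as the conditional probability that it equals `w ∘ σ`. -/
theorem resampled_statistics_conditionally_exchangeable
    {α γ : Type*} [Fintype α] (B : ℕ)
    (q : γ → α → ℝ) (hq0 : ∀ b a, 0 ≤ q b a) (hq1 : ∀ b, ∑ a, q b a = 1)
    (T : α → γ → ℝ) (b : γ) (σ : Equiv.Perm (Fin (B + 1))) (w : Fin (B + 1) → ℝ) :
    (∑ v : Fin (B + 1) → α,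
        if (∀ i, T (v i) b = w i) then ∏ i, q b (v i) else 0)
      = ∑ v : Fin (B + 1) → α,
        if (∀ i, T (v i) b = w (σ i)) then ∏ i, q b (v i) else 0 :=
  resampled_statistics_conditionally_exchangeable_general B q T b σ w
end

section
/- Consider two time periods with variables (X_1, Z_1, Y_1, X_2, Z_2). Suppose tilde{X}_1 is drawn from the conditional law of X_1 given Z_1 and tilde{X}_2 from the conditional law of X_2 given (X_1 = tilde{X}_1, Z_1, Z_2, Y_1), independently of (X_1, X_2) given (Z_1, Z_2, Y_1). If (tilde{X}_1, tilde{X}_2, Z_1, Z_2, Y_1, Y_2) is equal in distribution to (X_1, X_2, Z_1, Z_2, Y_1, Y_2), then the conditional law of Z_2 given (X_1, Y_1, Z_1) does not depend on X_1, i.e., P(Z_2 = z_2 | X_1 = x_1, Y_1 = y_1, Z_1 = z_1) = P(Z_2 = z_2 | Y_1 = y_1, Z_1 = z_1) for all values in the support. -/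
/-!
Summing the resampling identity over `x₂` and `y₂` makes the kernel `q₂` of `tilde X₂` drop out
(it sums to one), leaving `P(x₁, z₁, z₂, y₁) = P(z₁, z₂, y₁) ⬝ q₁(x₁ | z₁)`. Since `q₁` does not
involve `z₂`, it cancels when this is normalised over `z₂`, so the conditional law of `Z₂` given
`(X₁, Y₁, Z₁)` is the one given `(Y₁, Z₁)`.
-/

open Finset

theorem Finset.div_sum_eq_div_sum_of_eq_mul_const {ι K : Type*} [Field K] (s : Finset ι)
    {f g : ι → K} {c : K} (hc : c ≠ 0) (hfg : ∀ i, f i = g i * c) (i : ι) :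
    f i / ∑ j ∈ s, f j = g i / ∑ j ∈ s, g j := by
  simp_rw [hfg, ← sum_mul, mul_div_mul_right _ _ hc]

theorem Fintype.sum_sum_eq_sum_mul_of_eq_mul_marginal {α β K : Type*} [Fintype α] [Fintype β]
    [Field K] {p : α → β → K} {m : β → K} {c : K} (a₀ : α) (b₀ : β) (h₀ : p a₀ b₀ ≠ 0)
    (hp : ∀ a b, m b * c * ((∑ b', p a b') / ∑ a', ∑ b', p a' b') = p a b) :
    ∑ a, ∑ b, p a b = (∑ b, m b) * c := by
  have htotal : ∑ a', ∑ b', p a' b' ≠ 0 := by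
    intro h
    rw [← hp a₀ b₀, h, div_zero, mul_zero] at h₀
    exact h₀ rfl
  calc ∑ a, ∑ b, p a b = ∑ a, ∑ b, m b * c * ((∑ b', p a b') / ∑ a', ∑ b', p a' b') := by
        simp only [hp]
    _ = ∑ b, ∑ a, m b * c * ((∑ b', p a b') / ∑ a', ∑ b', p a' b') := Finset.sum_comm
    _ = ∑ b, m b * c := by simp only [← mul_sum, ← sum_div, div_self htotal, mul_one]
    _ = (∑ b, m b) * c := (sum_mul _ _ _).symm

theorem necessity_of_no_adaptation_two_periods_general
    {𝒳 𝒵 𝒴 : Type*} [Fintype 𝒳] [Fintype 𝒵] [Fintype 𝒴]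
    (p : 𝒳 → 𝒳 → 𝒵 → 𝒵 → 𝒴 → 𝒴 → ℝ)
    (hpos : ∀ x1 x2 z1 z2 y1 y2, 0 < p x1 x2 z1 z2 y1 y2)
    -- distributional equality of `(tilde X₁, tilde X₂, Z₁, Z₂, Y₁, Y₂)` and the original data
    (hdisteq : ∀ x1 x2 z1 z2 y1 y2,
      (∑ x1' , ∑ x2', p x1' x2' z1 z2 y1 y2) *
        ((∑ x2', ∑ z2', ∑ y1', ∑ y2', p x1 x2' z1 z2' y1' y2') /
          (∑ x1', ∑ x2', ∑ z2', ∑ y1', ∑ y2', p x1' x2' z1 z2' y1' y2')) *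
        ((∑ y2', p x1 x2 z1 z2 y1 y2') /
          (∑ x2', ∑ y2', p x1 x2' z1 z2 y1 y2'))
      = p x1 x2 z1 z2 y1 y2) :
    ∀ x1 y1 z1 z2,
      (∑ x2, ∑ y2, p x1 x2 z1 z2 y1 y2) /
          (∑ x2, ∑ z2', ∑ y2, p x1 x2 z1 z2' y1 y2)
        = (∑ x1', ∑ x2, ∑ y2, p x1' x2 z1 z2 y1 y2) /
          (∑ x1', ∑ x2, ∑ z2', ∑ y2, p x1' x2 z1 z2' y1 y2) := by
  intro x1 y1 z1 z2
  set q₁ := (∑ x2', ∑ z2', ∑ y1', ∑ y2', p x1 x2' z1 z2' y1' y2') /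
    (∑ x1', ∑ x2', ∑ z2', ∑ y1', ∑ y2', p x1' x2' z1 z2' y1' y2')
  have hq₁ : q₁ ≠ 0 := by
    intro h
    have := hdisteq x1 x1 z1 z2 y1 y1
    change _ * q₁ * _ = _ at this
    rw [h, mul_zero, zero_mul] at this
    exact (hpos x1 x1 z1 z2 y1 y1).ne this
  have hmarginal : ∀ w, ∑ x2, ∑ y2, p x1 x2 z1 w y1 y2
      = (∑ x1', ∑ x2, ∑ y2, p x1' x2 z1 w y1 y2) * q₁ := fun w ↦ by
    rw [Fintype.sum_sum_eq_sum_mul_of_eq_mul_marginal x1 y1 (hpos x1 x1 z1 w y1 y1).ne'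
      (hdisteq x1 · z1 w y1 ·), sum_comm]
    exact congrArg (· * q₁) (sum_congr rfl fun _ _ ↦ sum_comm)
  have hden₁ : ∑ x2, ∑ z2', ∑ y2, p x1 x2 z1 z2' y1 y2 = ∑ z2', ∑ x2, ∑ y2, p x1 x2 z1 z2' y1 y2 :=
    sum_comm
  have hden₂ : ∑ x1', ∑ x2, ∑ z2', ∑ y2, p x1' x2 z1 z2' y1 y2
      = ∑ z2', ∑ x1', ∑ x2, ∑ y2, p x1' x2 z1 z2' y1 y2 :=
    (sum_congr rfl fun _ _ ↦ sum_comm).trans sum_comm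
  rw [hden₁, hden₂]
  exact div_sum_eq_div_sum_of_eq_mul_const univ hq₁ hmarginal z2

/-- **necessity, two periods.** Let `p` be the (everywhere positive) joint pmf of
`(X₁, X₂, Z₁, Z₂, Y₁, Y₂)`. The natural adaptive resampling procedure draws `tilde X₁` from the
conditional law of `X₁` given `Z₁` and `tilde X₂` from the conditional law of `X₂` given
`(X₁ = tilde X₁, Z₁, Z₂, Y₁)`, independently of `(X₁, X₂)` given `(Z₁, Z₂, Y₁, Y₂)`; the joint
pmf of `(tilde X₁, tilde X₂, Z₁, Z₂, Y₁, Y₂)` is therefore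
`m(z₁,z₂,y₁,y₂) ⬝ q₁(x₁|z₁) ⬝ q₂(x₂|x₁,z₁,z₂,y₁)`. If this equals `p` everywhere, then
`P(Z₂ = z₂ | X₁ = x₁, Y₁ = y₁, Z₁ = z₁) = P(Z₂ = z₂ | Y₁ = y₁, Z₁ = z₁)`. -/
theorem necessity_of_no_adaptation_two_periods
    {𝒳 𝒵 𝒴 : Type*} [Fintype 𝒳] [Fintype 𝒵] [Fintype 𝒴]
    (p : 𝒳 → 𝒳 → 𝒵 → 𝒵 → 𝒴 → 𝒴 → ℝ)
    (hpos : ∀ x1 x2 z1 z2 y1 y2, 0 < p x1 x2 z1 z2 y1 y2)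
    (hsum : ∑ x1, ∑ x2, ∑ z1, ∑ z2, ∑ y1, ∑ y2, p x1 x2 z1 z2 y1 y2 = 1)
    -- distributional equality of `(tilde X₁, tilde X₂, Z₁, Z₂, Y₁, Y₂)` and the original data
    (hdisteq : ∀ x1 x2 z1 z2 y1 y2,
      (∑ x1' , ∑ x2', p x1' x2' z1 z2 y1 y2) *
        ((∑ x2', ∑ z2', ∑ y1', ∑ y2', p x1 x2' z1 z2' y1' y2') /
          (∑ x1', ∑ x2', ∑ z2', ∑ y1', ∑ y2', p x1' x2' z1 z2' y1' y2')) *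
        ((∑ y2', p x1 x2 z1 z2 y1 y2') /
          (∑ x2', ∑ y2', p x1 x2' z1 z2 y1 y2'))
      = p x1 x2 z1 z2 y1 y2) :
    ∀ x1 y1 z1 z2,
      (∑ x2, ∑ y2, p x1 x2 z1 z2 y1 y2) /
          (∑ x2, ∑ z2', ∑ y2, p x1 x2 z1 z2' y1 y2)
        = (∑ x1', ∑ x2, ∑ y2, p x1' x2 z1 z2 y1 y2) /
          (∑ x1', ∑ x2, ∑ z2', ∑ y2, p x1' x2 z1 z2' y1 y2) :=
  necessity_of_no_adaptation_two_periods_general p hpos hdisteq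
end

section
/- Fix q_1 in (0,1), q_j > 0, and h_0 > 0. With w_h^{(j)}(y) = q_j e^{-y^2/2} / (q_1 e^{-(y-h)^2/2} + (1-q_1) e^{-y^2/2}) for j != 1 (the posterior weight of a null arm), and Y_h having mixture density (1-q_1) phi(y) + q_1 phi(y - h), it holds that lim_{h -> 0} (1/h) E[w_h^{(j)}(Y_h) Y_h] = 0; i.e., E[w_h^{(j)}(Y_h) Y_h] = o(h) as h -> 0. -/
/-!
The denominator of the posterior weight is, up to the factor `√(2π)`, the mixture density
itself, so `w_h^{(j)}(y) · mixPDF(y) = q_j φ(y)`: the null and shifted contributions cancel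
exactly, not just to first order. Hence `E[w_h^{(j)}(Y_h) Y_h] = q_j ∫ y φ(y) dy = 0` for
every `h`, by oddness of `y ↦ y φ(y)`.
-/

open MeasureTheory Filter Topology

/-- Standard normal density. -/
noncomputable def stdNormalPDF (y : ℝ) : ℝ :=
  Real.exp (-(y ^ 2) / 2) / Real.sqrt (2 * Real.pi)

/-- Density of the two-component Gaussian mixture `(1-q₁) N(0,1) + q₁ N(h,1)`. -/
noncomputable def mixPDF (q1 h y : ℝ) : ℝ :=
  (1 - q1) * stdNormalPDF y + q1 * stdNormalPDF (y - h)

/-- Posterior weight `w_h^{(j)}` of a null arm `j ≠ 1` with prior weight `qj`. -/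
noncomputable def postWnull (q1 qj h y : ℝ) : ℝ :=
  qj * Real.exp (-(y ^ 2) / 2) /
    (q1 * Real.exp (-((y - h) ^ 2) / 2) + (1 - q1) * Real.exp (-(y ^ 2) / 2))

theorem integral_eq_zero_of_odd {G E : Type*} [MeasurableSpace G] [AddGroup G] [MeasurableNeg G]
    [NormedAddCommGroup E] [NormedSpace ℝ E] (μ : Measure G) [μ.IsNegInvariant] {f : G → E}
    (hf : ∀ x, f (-x) = -f x) : ∫ x, f x ∂μ = 0 := by
  have h := integral_neg_eq_self f μ
  simp only [hf, integral_neg] at h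
  rw [neg_eq_iff_add_eq_zero, ← two_smul ℝ, smul_eq_zero] at h
  exact h.resolve_left two_ne_zero

theorem integral_id_mul_stdNormalPDF : ∫ y, y * stdNormalPDF y = 0 :=
  integral_eq_zero_of_odd volume fun y => by simp [stdNormalPDF, neg_div]

theorem mixPDF_eq_div_sqrt (q1 h y : ℝ) :
    mixPDF q1 h y = (q1 * Real.exp (-((y - h) ^ 2) / 2) + (1 - q1) * Real.exp (-(y ^ 2) / 2)) /
      Real.sqrt (2 * Real.pi) := by
  unfold mixPDF stdNormalPDF
  ring

theorem postWnull_mul_mixPDF {q1 : ℝ} (hq1₀ : 0 ≤ q1) (hq1₁ : q1 ≤ 1) (qj h y : ℝ) :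
    postWnull q1 qj h y * mixPDF q1 h y = qj * stdNormalPDF y := by
  have hden : 0 < q1 * Real.exp (-((y - h) ^ 2) / 2) + (1 - q1) * Real.exp (-(y ^ 2) / 2) := by
    rcases hq1₀.eq_or_lt with rfl | hq1pos
    · simpa using Real.exp_pos _
    · exact add_pos_of_pos_of_nonneg (by positivity)
        (mul_nonneg (sub_nonneg.mpr hq1₁) (Real.exp_pos _).le)
  rw [mixPDF_eq_div_sqrt, postWnull, stdNormalPDF, div_mul_div_cancel₀ hden.ne', mul_div_assoc]

theorem integral_postWnull_mul_id_mul_mixPDF {q1 : ℝ} (hq1₀ : 0 ≤ q1) (hq1₁ : q1 ≤ 1)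
    (qj h : ℝ) : ∫ y, postWnull q1 qj h y * y * mixPDF q1 h y = 0 := by
  have hpoint : ∀ y, postWnull q1 qj h y * y * mixPDF q1 h y = qj * (y * stdNormalPDF y) :=
    fun y => by rw [mul_right_comm, postWnull_mul_mixPDF hq1₀ hq1₁]; ring
  simp only [hpoint, integral_const_mul, integral_id_mul_stdNormalPDF, mul_zero]

theorem limit_null_arm_first_moment_general
    (q1 qj : ℝ) (hq1 : q1 ∈ Set.Ioo (0 : ℝ) 1) :
    Tendsto (fun h : ℝ => (1 / h) * ∫ y, postWnull q1 qj h y * y * mixPDF q1 h y)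
      (𝓝[>] (0 : ℝ)) (𝓝 0) := by
  simp only [integral_postWnull_mul_id_mul_mixPDF hq1.1.le hq1.2.le, mul_zero]
  exact tendsto_const_nhds

/-- For a null arm `j ≠ 1`, `E[w_h^{(j)}(Y_h) Y_h] = o(h)` as `h → 0⁺`,
i.e. `lim_{h → 0⁺} (1/h) E[w_h^{(j)}(Y_h) Y_h] = 0`. -/
theorem limit_null_arm_first_moment
    (q1 qj : ℝ) (hq1 : q1 ∈ Set.Ioo (0 : ℝ) 1) (hqj : 0 < qj) (h0 : ℝ) (hh0 : 0 < h0) :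
    Tendsto (fun h : ℝ => (1 / h) * ∫ y, postWnull q1 qj h y * y * mixPDF q1 h y)
      (𝓝[>] (0 : ℝ)) (𝓝 0) :=
  limit_null_arm_first_moment_general q1 qj hq1
end

section
/- Fix q_1 in (0,1) and let Y_h have mixture density (1-q_1) phi(y) + q_1 phi(y - h). Let w_h(y) = q_1 e^{-(y-h)^2/2} / (q_1 e^{-(y-h)^2/2} + (1-q_1) e^{-y^2/2}). Then lim_{h -> 0} E[Y_h * w_h(Y_h) Y_h] = q_1 and lim_{h -> 0} Var(w_h(Y_h) Y_h) = q_1^2, so the asymptotic correlation between Y_h and w_h(Y_h) Y_h equals 1 (using Var(Y_h) -> 1). -/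
open MeasureTheory Filter Topology

set_option maxHeartbeats 1000000

lemma sqrt2pi_pos : 0 < Real.sqrt (2 * Real.pi) :=
  Real.sqrt_pos.2 (by positivity)

lemma stdNormalPDF_eq (y : ℝ) :
    stdNormalPDF y = Real.exp (-(2⁻¹ : ℝ) * y ^ 2) * (Real.sqrt (2 * Real.pi))⁻¹ := by
  rw [stdNormalPDF, show -(y ^ 2) / 2 = -(2⁻¹ : ℝ) * y ^ 2 by ring, div_eq_mul_inv]

lemma integrable_exp_half : Integrable (fun y : ℝ => Real.exp (-(2⁻¹ : ℝ) * y ^ 2)) :=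
  integrable_exp_neg_mul_sq (by norm_num)

lemma integrable_mul_exp_half : Integrable (fun y : ℝ => y * Real.exp (-(2⁻¹ : ℝ) * y ^ 2)) :=
  integrable_mul_exp_neg_mul_sq (by norm_num)

lemma integrable_sq_exp (b : ℝ) (hb : 0 < b) :
    Integrable (fun y : ℝ => y ^ 2 * Real.exp (-b * y ^ 2)) := by
  have := integrable_rpow_mul_exp_neg_mul_sq hb (s := 2) (by norm_num)
  refine this.congr ?_
  filter_upwards with y
  rw [show ((2:ℝ)) = ((2:ℕ):ℝ) by norm_num, Real.rpow_natCast]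

lemma integral_exp_half : ∫ y : ℝ, Real.exp (-(2⁻¹ : ℝ) * y ^ 2) = Real.sqrt (2 * Real.pi) := by
  rw [integral_gaussian, show (Real.pi / 2⁻¹) = 2 * Real.pi by ring]

lemma integral_mul_exp_half : ∫ y : ℝ, y * Real.exp (-(2⁻¹ : ℝ) * y ^ 2) = 0 := by
  have hderiv : ∀ x : ℝ, HasDerivAt (fun y : ℝ => -Real.exp (-(2⁻¹ : ℝ) * y ^ 2))
      (x * Real.exp (-(2⁻¹ : ℝ) * x ^ 2)) x := by
    intro x
    have h1 : HasDerivAt (fun y : ℝ => -(2⁻¹ : ℝ) * y ^ 2) (-x) x := by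
      have := (hasDerivAt_pow 2 x).const_mul (-(2⁻¹ : ℝ))
      exact this.congr_deriv (by push_cast; ring)
    have h2 := (h1.exp).neg
    exact h2.congr_deriv (by ring)
  have hlim : Tendsto (fun y : ℝ => -Real.exp (-(2⁻¹ : ℝ) * y ^ 2)) atTop (𝓝 0) := by
    have h : Tendsto (fun y : ℝ => -(2⁻¹ : ℝ) * y ^ 2) atTop atBot := by
      apply Tendsto.const_mul_atTop_of_neg (by norm_num)
      exact tendsto_pow_atTop (by norm_num)
    simpa using (Real.tendsto_exp_atBot.comp h).neg
  have hlim' : Tendsto (fun y : ℝ => -Real.exp (-(2⁻¹ : ℝ) * y ^ 2)) atBot (𝓝 0) := by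
    have h : Tendsto (fun y : ℝ => -(2⁻¹ : ℝ) * y ^ 2) atBot atBot := by
      have hp : Tendsto (fun z : ℝ => z ^ 2) atTop atTop := tendsto_pow_atTop two_ne_zero
      have h2 : Tendsto (fun y : ℝ => y ^ 2) atBot atTop :=
        (hp.comp tendsto_neg_atBot_atTop).congr fun y => neg_sq y
      exact Tendsto.const_mul_atTop_of_neg (by norm_num) h2
    simpa using (Real.tendsto_exp_atBot.comp h).neg
  have := integral_of_hasDerivAt_of_tendsto hderiv integrable_mul_exp_half hlim' hlim
  simpa using this

lemma integral_sq_exp_half :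
    ∫ y : ℝ, y ^ 2 * Real.exp (-(2⁻¹ : ℝ) * y ^ 2) = Real.sqrt (2 * Real.pi) := by
  have hderiv : ∀ x : ℝ, HasDerivAt (fun y : ℝ => y * Real.exp (-(2⁻¹ : ℝ) * y ^ 2))
      (Real.exp (-(2⁻¹ : ℝ) * x ^ 2) - x ^ 2 * Real.exp (-(2⁻¹ : ℝ) * x ^ 2)) x := by
    intro x
    have h1 : HasDerivAt (fun y : ℝ => -(2⁻¹ : ℝ) * y ^ 2) (-x) x := by
      have := (hasDerivAt_pow 2 x).const_mul (-(2⁻¹ : ℝ))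
      exact this.congr_deriv (by push_cast; ring)
    have h2 := (hasDerivAt_id x).mul h1.exp
    exact h2.congr_deriv (by simp only [id_eq]; ring)
  have hint : Integrable (fun x : ℝ => Real.exp (-(2⁻¹ : ℝ) * x ^ 2)
      - x ^ 2 * Real.exp (-(2⁻¹ : ℝ) * x ^ 2)) :=
    integrable_exp_half.sub (integrable_sq_exp _ (by norm_num))
  have h0 := integral_eq_zero_of_hasDerivAt_of_integrable hderiv hint integrable_mul_exp_half
  have := integral_sub integrable_exp_half (integrable_sq_exp 2⁻¹ (by norm_num))
  rw [this] at h0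
  rw [← integral_exp_half]
  linarith

-- φ-level
lemma integrable_phi : Integrable stdNormalPDF := by
  have := integrable_exp_half.mul_const (Real.sqrt (2 * Real.pi))⁻¹
  refine this.congr ?_
  filter_upwards with y
  rw [stdNormalPDF_eq]

lemma integrable_id_phi : Integrable (fun y : ℝ => y * stdNormalPDF y) := by
  have := integrable_mul_exp_half.mul_const (Real.sqrt (2 * Real.pi))⁻¹
  refine this.congr ?_
  filter_upwards with y
  rw [stdNormalPDF_eq]; ring

lemma integrable_sq_phi : Integrable (fun y : ℝ => y ^ 2 * stdNormalPDF y) := by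
  have := (integrable_sq_exp 2⁻¹ (by norm_num)).mul_const (Real.sqrt (2 * Real.pi))⁻¹
  refine this.congr ?_
  filter_upwards with y
  rw [stdNormalPDF_eq]; ring

lemma integral_phi : ∫ y : ℝ, stdNormalPDF y = 1 := by
  simp only [stdNormalPDF_eq]
  rw [integral_mul_const, integral_exp_half, mul_inv_cancel₀ sqrt2pi_pos.ne']

lemma integral_id_phi : ∫ y : ℝ, y * stdNormalPDF y = 0 := by
  simp only [stdNormalPDF_eq, ← mul_assoc]
  rw [integral_mul_const, integral_mul_exp_half, zero_mul]

lemma integral_sq_phi : ∫ y : ℝ, y ^ 2 * stdNormalPDF y = 1 := by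
  simp only [stdNormalPDF_eq, ← mul_assoc]
  rw [integral_mul_const, integral_sq_exp_half, mul_inv_cancel₀ sqrt2pi_pos.ne']

-- shifted versions
lemma integrable_phi_shift (h : ℝ) : Integrable (fun y : ℝ => stdNormalPDF (y - h)) :=
  integrable_phi.comp_sub_right h

lemma integrable_id_phi_shift (h : ℝ) : Integrable (fun y : ℝ => y * stdNormalPDF (y - h)) := by
  have : Integrable (fun z : ℝ => (z + h) * stdNormalPDF z) :=
    integrable_id_phi.add (integrable_phi.const_mul h) |>.congr
      (by filter_upwards with z; simp only [Pi.add_apply]; ring)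
  refine (this.comp_sub_right h).congr ?_
  filter_upwards with y
  simp

lemma integrable_sq_phi_shift (h : ℝ) : Integrable (fun y : ℝ => y ^ 2 * stdNormalPDF (y - h)) := by
  have : Integrable (fun z : ℝ => (z + h) ^ 2 * stdNormalPDF z) := by
    have := (integrable_sq_phi.add ((integrable_id_phi.const_mul (2 * h)))).add
      (integrable_phi.const_mul (h ^ 2))
    refine this.congr ?_
    filter_upwards with z; simp only [Pi.add_apply]; ring
  refine (this.comp_sub_right h).congr ?_
  filter_upwards with y
  simp

lemma integral_phi_shift (h : ℝ) : ∫ y : ℝ, stdNormalPDF (y - h) = 1 := by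
  rw [integral_sub_right_eq_self stdNormalPDF h, integral_phi]

lemma integral_id_phi_shift (h : ℝ) : ∫ y : ℝ, y * stdNormalPDF (y - h) = h := by
  have e : (fun y : ℝ => y * stdNormalPDF (y - h))
      = fun y : ℝ => (fun z : ℝ => (z + h) * stdNormalPDF z) (y - h) := by
    funext y; simp
  rw [e, integral_sub_right_eq_self (fun z : ℝ => (z + h) * stdNormalPDF z) h]
  have : (fun z : ℝ => (z + h) * stdNormalPDF z)
      = fun z : ℝ => z * stdNormalPDF z + h * stdNormalPDF z := by funext z; ring
  rw [this, integral_add integrable_id_phi (integrable_phi.const_mul h),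
    integral_id_phi, integral_const_mul, integral_phi]
  ring

lemma integral_sq_phi_shift (h : ℝ) : ∫ y : ℝ, y ^ 2 * stdNormalPDF (y - h) = 1 + h ^ 2 := by
  have e : (fun y : ℝ => y ^ 2 * stdNormalPDF (y - h))
      = fun y : ℝ => (fun z : ℝ => (z + h) ^ 2 * stdNormalPDF z) (y - h) := by
    funext y; simp
  rw [e, integral_sub_right_eq_self (fun z : ℝ => (z + h) ^ 2 * stdNormalPDF z) h]
  have : (fun z : ℝ => (z + h) ^ 2 * stdNormalPDF z)
      = fun z : ℝ => z ^ 2 * stdNormalPDF z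
        + ((2 * h) * (z * stdNormalPDF z) + h ^ 2 * stdNormalPDF z) := by funext z; ring
  have ig : Integrable (fun z : ℝ => 2 * h * (z * stdNormalPDF z) + h ^ 2 * stdNormalPDF z) :=
    (integrable_id_phi.const_mul (2 * h)).add (integrable_phi.const_mul (h ^ 2)) |>.congr
      (by filter_upwards with z; simp only [Pi.add_apply])
  rw [this, integral_add integrable_sq_phi ig,
    integral_add (integrable_id_phi.const_mul (2 * h)) (integrable_phi.const_mul (h ^ 2)),
    integral_sq_phi, integral_const_mul, integral_const_mul, integral_id_phi, integral_phi]
  ring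

/-- Posterior weight of the shifted component. -/
noncomputable def postW (q1 h y : ℝ) : ℝ :=
  q1 * Real.exp (-((y - h) ^ 2) / 2) /
    (q1 * Real.exp (-((y - h) ^ 2) / 2) + (1 - q1) * Real.exp (-(y ^ 2) / 2))

section Key
variable {q1 : ℝ} (hq1 : q1 ∈ Set.Ioo (0 : ℝ) 1)
include hq1

lemma den_pos (h y : ℝ) :
    0 < q1 * Real.exp (-((y - h) ^ 2) / 2) + (1 - q1) * Real.exp (-(y ^ 2) / 2) := by
  exact add_pos (mul_pos hq1.1 (Real.exp_pos _))
    (mul_pos (by linarith [hq1.2]) (Real.exp_pos _))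

lemma postW_mul_mix (h y : ℝ) :
    postW q1 h y * mixPDF q1 h y = q1 * stdNormalPDF (y - h) := by
  have hden := (den_pos hq1 h y).ne'
  rw [postW, mixPDF, stdNormalPDF, stdNormalPDF]
  rw [div_mul_eq_mul_div, div_eq_iff hden]
  ring

lemma postW_nonneg (h y : ℝ) : 0 ≤ postW q1 h y :=
  div_nonneg (mul_nonneg hq1.1.le (Real.exp_pos _).le) (le_of_lt (den_pos hq1 h y))

lemma postW_le_one (h y : ℝ) : postW q1 h y ≤ 1 := by
  rw [postW, div_le_one (den_pos hq1 h y)]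
  nlinarith [Real.exp_pos (-(y ^ 2) / 2), hq1.2]

omit hq1 in
lemma postW_zero (y : ℝ) : postW q1 0 y = q1 := by
  have hE := Real.exp_pos (-(y ^ 2) / 2)
  rw [postW]
  simp only [sub_zero]
  rw [show q1 * Real.exp (-(y ^ 2) / 2) + (1 - q1) * Real.exp (-(y ^ 2) / 2)
      = Real.exp (-(y ^ 2) / 2) by ring, div_eq_iff hE.ne']

-- mixture moment integrals
lemma integral_id_mix (h : ℝ) : ∫ y : ℝ, y * mixPDF q1 h y = q1 * h := by
  have e : (fun y : ℝ => y * mixPDF q1 h y)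
      = fun y : ℝ => (1 - q1) * (y * stdNormalPDF y) + q1 * (y * stdNormalPDF (y - h)) := by
    funext y; rw [mixPDF]; ring
  rw [e, integral_add ((integrable_id_phi.const_mul _)) ((integrable_id_phi_shift h).const_mul _),
    integral_const_mul, integral_const_mul, integral_id_phi, integral_id_phi_shift]
  ring

lemma integral_sq_mix (h : ℝ) : ∫ y : ℝ, y ^ 2 * mixPDF q1 h y = 1 + q1 * h ^ 2 := by
  have e : (fun y : ℝ => y ^ 2 * mixPDF q1 h y)
      = fun y : ℝ => (1 - q1) * (y ^ 2 * stdNormalPDF y)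
        + q1 * (y ^ 2 * stdNormalPDF (y - h)) := by
    funext y; rw [mixPDF]; ring
  rw [e, integral_add ((integrable_sq_phi.const_mul _)) ((integrable_sq_phi_shift h).const_mul _),
    integral_const_mul, integral_const_mul, integral_sq_phi, integral_sq_phi_shift]
  ring

lemma integral_w_mix (h : ℝ) : ∫ y : ℝ, postW q1 h y * y * mixPDF q1 h y = q1 * h := by
  have e : (fun y : ℝ => postW q1 h y * y * mixPDF q1 h y)
      = fun y : ℝ => q1 * (y * stdNormalPDF (y - h)) := by
    funext y
    have := postW_mul_mix hq1 h y
    linear_combination y * this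
  rw [e, integral_const_mul, integral_id_phi_shift]

lemma integral_yw_mix (h : ℝ) :
    ∫ y : ℝ, y * (postW q1 h y * y) * mixPDF q1 h y = q1 * (1 + h ^ 2) := by
  have e : (fun y : ℝ => y * (postW q1 h y * y) * mixPDF q1 h y)
      = fun y : ℝ => q1 * (y ^ 2 * stdNormalPDF (y - h)) := by
    funext y
    have := postW_mul_mix hq1 h y
    linear_combination y ^ 2 * this
  rw [e, integral_const_mul, integral_sq_phi_shift]

end Key

section Main
variable {q1 : ℝ} (hq1 : q1 ∈ Set.Ioo (0 : ℝ) 1)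
include hq1

lemma continuous_phi : Continuous stdNormalPDF := by
  unfold stdNormalPDF
  exact (Real.continuous_exp.comp (by fun_prop)).div_const _

lemma tendsto_A :
    Tendsto (fun h : ℝ => ∫ y, (postW q1 h y * y) ^ 2 * mixPDF q1 h y)
      (𝓝[>] (0 : ℝ)) (𝓝 (q1 ^ 2)) := by
  have hFeq : ∀ h y : ℝ, (postW q1 h y * y) ^ 2 * mixPDF q1 h y
      = postW q1 h y * (q1 * (y ^ 2 * stdNormalPDF (y - h))) := fun h y => by
    linear_combination (postW q1 h y * y ^ 2) * postW_mul_mix hq1 h y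
  simp only [hFeq]
  have key : Tendsto (fun h : ℝ => ∫ y, postW q1 h y * (q1 * (y ^ 2 * stdNormalPDF (y - h))))
      (𝓝[>] (0 : ℝ)) (𝓝 (∫ y : ℝ, q1 * (q1 * (y ^ 2 * stdNormalPDF y)))) := by
    apply tendsto_integral_filter_of_dominated_convergence
      (bound := fun y : ℝ => q1 * Real.exp (2⁻¹) / Real.sqrt (2 * Real.pi)
        * (y ^ 2 * Real.exp (-(4⁻¹ : ℝ) * y ^ 2)))
    · filter_upwards with h
      have cpw : Continuous (fun y : ℝ => postW q1 h y) := by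
        apply Continuous.div (by fun_prop) (by fun_prop)
        exact fun y => (den_pos hq1 h y).ne'
      exact (cpw.mul (continuous_const.mul ((continuous_pow 2).mul
        (continuous_phi hq1 |>.comp (by fun_prop))))).aestronglyMeasurable
    · filter_upwards [Ioo_mem_nhdsGT_of_mem (Set.mem_Ico.2 ⟨le_refl (0:ℝ), zero_lt_one⟩)] with h hh
      filter_upwards with y
      have hphi : 0 ≤ stdNormalPDF (y - h) := by
        rw [stdNormalPDF]; positivity
      have hb1 : stdNormalPDF (y - h)
          ≤ Real.exp (2⁻¹) * Real.exp (-(4⁻¹ : ℝ) * y ^ 2) / Real.sqrt (2 * Real.pi) := by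
        rw [stdNormalPDF, div_le_div_iff_of_pos_right sqrt2pi_pos, ← Real.exp_add]
        apply Real.exp_le_exp.2
        nlinarith [sq_nonneg (y - 2 * h), hh.1.le, hh.2.le]
      have h0 := postW_nonneg hq1 h y
      have h1 := postW_le_one hq1 h y
      have hq0 : (0:ℝ) ≤ q1 := hq1.1.le
      have hrest : 0 ≤ q1 * (y ^ 2 * stdNormalPDF (y - h)) :=
        mul_nonneg hq0 (mul_nonneg (sq_nonneg y) hphi)
      rw [Real.norm_eq_abs, abs_of_nonneg (mul_nonneg h0 hrest)]
      calc postW q1 h y * (q1 * (y ^ 2 * stdNormalPDF (y - h)))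
          ≤ 1 * (q1 * (y ^ 2 * stdNormalPDF (y - h))) := by
            exact mul_le_mul_of_nonneg_right h1 hrest
        _ = q1 * (y ^ 2 * stdNormalPDF (y - h)) := one_mul _
        _ ≤ q1 * (y ^ 2 * (Real.exp (2⁻¹) * Real.exp (-(4⁻¹ : ℝ) * y ^ 2)
              / Real.sqrt (2 * Real.pi))) := by
            apply mul_le_mul_of_nonneg_left
              (mul_le_mul_of_nonneg_left hb1 (sq_nonneg y)) hq1.1.le
        _ = q1 * Real.exp (2⁻¹) / Real.sqrt (2 * Real.pi)
              * (y ^ 2 * Real.exp (-(4⁻¹ : ℝ) * y ^ 2)) := by ring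
    · exact ((integrable_sq_exp 4⁻¹ (by norm_num)).const_mul _)
    · filter_upwards with y
      have cd : Continuous (fun h : ℝ => postW q1 h y) := by
        apply Continuous.div (by fun_prop) (by fun_prop)
        exact fun h => (den_pos hq1 h y).ne'
      have c2 : Continuous (fun h : ℝ => q1 * (y ^ 2 * stdNormalPDF (y - h))) :=
        continuous_const.mul (continuous_const.mul
          ((continuous_phi hq1).comp (by fun_prop)))
      have : Tendsto (fun h : ℝ => postW q1 h y * (q1 * (y ^ 2 * stdNormalPDF (y - h))))
          (𝓝[>] (0 : ℝ)) (𝓝 (postW q1 0 y * (q1 * (y ^ 2 * stdNormalPDF (y - 0))))) :=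
        ((cd.mul c2).tendsto 0).mono_left nhdsWithin_le_nhds
      simpa [postW_zero (q1 := q1) y] using this
  have : (∫ y : ℝ, q1 * (q1 * (y ^ 2 * stdNormalPDF y))) = q1 ^ 2 := by
    rw [integral_const_mul, integral_const_mul, integral_sq_phi]
    ring
  rwa [this] at key

end Main


/-- `lim_{h→0⁺} E[Y_h ⬝ w_h(Y_h) Y_h] = q₁`,
`lim_{h→0⁺} Var(w_h(Y_h) Y_h) = q₁²`, and consequently the correlation between `Y_h` and
`w_h(Y_h) Y_h` tends to `1`. -/
theorem limit_perfect_correlation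
    (q1 : ℝ) (hq1 : q1 ∈ Set.Ioo (0 : ℝ) 1) :
    Tendsto (fun h : ℝ => ∫ y, y * (postW q1 h y * y) * mixPDF q1 h y)
      (𝓝[>] (0 : ℝ)) (𝓝 q1) ∧
    Tendsto (fun h : ℝ => (∫ y, (postW q1 h y * y) ^ 2 * mixPDF q1 h y) -
        (∫ y, postW q1 h y * y * mixPDF q1 h y) ^ 2)
      (𝓝[>] (0 : ℝ)) (𝓝 (q1 ^ 2)) ∧
    Tendsto (fun h : ℝ =>
        ((∫ y, y * (postW q1 h y * y) * mixPDF q1 h y) -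
            (∫ y, y * mixPDF q1 h y) * (∫ y, postW q1 h y * y * mixPDF q1 h y)) /
          (Real.sqrt ((∫ y, y ^ 2 * mixPDF q1 h y) - (∫ y, y * mixPDF q1 h y) ^ 2) *
            Real.sqrt ((∫ y, (postW q1 h y * y) ^ 2 * mixPDF q1 h y) -
              (∫ y, postW q1 h y * y * mixPDF q1 h y) ^ 2)))
      (𝓝[>] (0 : ℝ)) (𝓝 1) := by
  have hA := tendsto_A hq1
  have part1 : Tendsto (fun h : ℝ => ∫ y, y * (postW q1 h y * y) * mixPDF q1 h y)
      (𝓝[>] (0 : ℝ)) (𝓝 q1) := by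
    have e1 : (fun h : ℝ => ∫ y, y * (postW q1 h y * y) * mixPDF q1 h y)
        = fun h : ℝ => q1 * (1 + h ^ 2) := funext fun h => integral_yw_mix hq1 h
    rw [e1]
    have : Tendsto (fun h : ℝ => q1 * (1 + h ^ 2)) (𝓝 0) (𝓝 (q1 * (1 + 0 ^ 2))) :=
      Continuous.tendsto (by continuity) 0
    simpa using this.mono_left nhdsWithin_le_nhds
  have hw2 : Tendsto (fun h : ℝ => ((q1 * h) ^ 2 : ℝ)) (𝓝[>] (0 : ℝ)) (𝓝 0) := by
    have : Tendsto (fun h : ℝ => ((q1 * h) ^ 2 : ℝ)) (𝓝 0) (𝓝 ((q1 * 0) ^ 2)) :=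
      Continuous.tendsto (by continuity) 0
    simpa using this.mono_left nhdsWithin_le_nhds
  have part2 : Tendsto (fun h : ℝ => (∫ y, (postW q1 h y * y) ^ 2 * mixPDF q1 h y) -
      (∫ y, postW q1 h y * y * mixPDF q1 h y) ^ 2) (𝓝[>] (0 : ℝ)) (𝓝 (q1 ^ 2)) := by
    have e2 : (fun h : ℝ => (∫ y, (postW q1 h y * y) ^ 2 * mixPDF q1 h y) -
        (∫ y, postW q1 h y * y * mixPDF q1 h y) ^ 2)
        = fun h : ℝ => (∫ y, (postW q1 h y * y) ^ 2 * mixPDF q1 h y) - (q1 * h) ^ 2 :=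
      funext fun h => by rw [integral_w_mix hq1]
    rw [e2]
    simpa using hA.sub hw2
  refine ⟨part1, part2, ?_⟩
  have e3 : (fun h : ℝ =>
        ((∫ y, y * (postW q1 h y * y) * mixPDF q1 h y) -
            (∫ y, y * mixPDF q1 h y) * (∫ y, postW q1 h y * y * mixPDF q1 h y)) /
          (Real.sqrt ((∫ y, y ^ 2 * mixPDF q1 h y) - (∫ y, y * mixPDF q1 h y) ^ 2) *
            Real.sqrt ((∫ y, (postW q1 h y * y) ^ 2 * mixPDF q1 h y) -
              (∫ y, postW q1 h y * y * mixPDF q1 h y) ^ 2)))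
      = fun h : ℝ => (q1 * (1 + h ^ 2) - (q1 * h) * (q1 * h)) /
          (Real.sqrt ((1 + q1 * h ^ 2) - (q1 * h) ^ 2) *
            Real.sqrt ((∫ y, (postW q1 h y * y) ^ 2 * mixPDF q1 h y) - (q1 * h) ^ 2)) :=
    funext fun h => by
      rw [integral_yw_mix hq1, integral_w_mix hq1, integral_id_mix hq1, integral_sq_mix hq1]
  rw [e3]
  have hnum : Tendsto (fun h : ℝ => q1 * (1 + h ^ 2) - (q1 * h) * (q1 * h))
      (𝓝[>] (0 : ℝ)) (𝓝 q1) := by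
    have : Tendsto (fun h : ℝ => q1 * (1 + h ^ 2) - (q1 * h) * (q1 * h)) (𝓝 0)
        (𝓝 (q1 * (1 + 0 ^ 2) - (q1 * 0) * (q1 * 0))) := Continuous.tendsto (by continuity) 0
    simpa using this.mono_left nhdsWithin_le_nhds
  have hd1 : Tendsto (fun h : ℝ => Real.sqrt ((1 + q1 * h ^ 2) - (q1 * h) ^ 2))
      (𝓝[>] (0 : ℝ)) (𝓝 1) := by
    have : Tendsto (fun h : ℝ => Real.sqrt ((1 + q1 * h ^ 2) - (q1 * h) ^ 2)) (𝓝 0)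
        (𝓝 (Real.sqrt ((1 + q1 * 0 ^ 2) - (q1 * 0) ^ 2))) :=
      Continuous.tendsto (by continuity) 0
    simpa using this.mono_left nhdsWithin_le_nhds
  have hd2 : Tendsto (fun h : ℝ =>
      Real.sqrt ((∫ y, (postW q1 h y * y) ^ 2 * mixPDF q1 h y) - (q1 * h) ^ 2))
      (𝓝[>] (0 : ℝ)) (𝓝 q1) := by
    have h' : Tendsto (fun h : ℝ =>
        (∫ y, (postW q1 h y * y) ^ 2 * mixPDF q1 h y) - (q1 * h) ^ 2)
        (𝓝[>] (0 : ℝ)) (𝓝 (q1 ^ 2)) := by simpa using hA.sub hw2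
    have := (Real.continuous_sqrt.tendsto (q1 ^ 2)).comp h'
    simpa [Function.comp_def, Real.sqrt_sq hq1.1.le] using this
  have hden : Tendsto (fun h : ℝ =>
      Real.sqrt ((1 + q1 * h ^ 2) - (q1 * h) ^ 2) *
        Real.sqrt ((∫ y, (postW q1 h y * y) ^ 2 * mixPDF q1 h y) - (q1 * h) ^ 2))
      (𝓝[>] (0 : ℝ)) (𝓝 q1) := by
    simpa using hd1.mul hd2
  have := hnum.div hden hq1.1.ne'
  simpa [Pi.div_def, div_self hq1.1.ne'] using this
end

section
/- Let (X, Y, Z) be random variables such that Y is conditionally independent of X given Z (the null hypothesis), and let tilde{X} be drawn from the conditional distribution of X given Z, independently of (X, Y) given Z. Then (tilde{X}, Y, Z) is equal in distribution to (X, Y, Z), and moreover X and tilde{X} are exchangeable conditionally on (Y, Z). -/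
open MeasureTheory ProbabilityTheory

/-- **single-observation CRT.** If `Y ⟂ X | Z` (the null hypothesis) and
`tilde X` is drawn from the conditional distribution of `X` given `Z`, independently of
`(X, Y)` given `Z`, then `(tilde X, Y, Z) =d (X, Y, Z)` and `X, tilde X` are exchangeable
conditionally on `(Y, Z)` (the joint law is invariant under swapping `X` and `tilde X`). -/
theorem crt_single_observation_exchangeability
    {Ω 𝒳 𝒴 𝒵 : Type*}
    {mΩ : MeasurableSpace Ω} [StandardBorelSpace Ω] [Nonempty Ω]
    [MeasurableSpace 𝒳] [StandardBorelSpace 𝒳] [Nonempty 𝒳]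
    [MeasurableSpace 𝒴] [MeasurableSpace 𝒵]
    (μ : Measure Ω) [IsProbabilityMeasure μ]
    (X Xtil : Ω → 𝒳) (Y : Ω → 𝒴) (Z : Ω → 𝒵)
    (hX : Measurable X) (hXtil : Measurable Xtil) (hY : Measurable Y) (hZ : Measurable Z)
    (hZle : MeasurableSpace.comap Z inferInstance ≤ mΩ)
    -- the null hypothesis `Y ⟂ X | Z`:
    (hnull : CondIndepFun (MeasurableSpace.comap Z inferInstance) hZle X Y μ)
    -- `tilde X` has the same conditional distribution given `Z` as `X` ...
    (hlaw : ∀ᵐ z ∂(μ.map Z), condDistrib Xtil Z μ z = condDistrib X Z μ z)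
    -- ... and is conditionally independent of `(X, Y)` given `Z`:
    (hcondindep : CondIndepFun (MeasurableSpace.comap Z inferInstance) hZle
      Xtil (fun ω => (X ω, Y ω)) μ) :
    μ.map (fun ω => (Xtil ω, Y ω, Z ω)) = μ.map (fun ω => (X ω, Y ω, Z ω)) ∧
      μ.map (fun ω => (X ω, Xtil ω, Y ω, Z ω)) =
        μ.map (fun ω => (Xtil ω, X ω, Y ω, Z ω)) := by
  classical
  -- transported law equality
  have hlaw' : ∀ᵐ ω ∂μ, condDistrib Xtil Z μ (Z ω) = condDistrib X Z μ (Z ω) :=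
    ae_of_ae_map hZ.aemeasurable hlaw
  -- swap of conditional expectations of indicators of X and Xtil
  have hswap : ∀ s : Set 𝒳, MeasurableSet s →
      (μ⟦Xtil ⁻¹' s | (MeasurableSpace.comap Z inferInstance)⟧) =ᵐ[μ] μ⟦X ⁻¹' s | (MeasurableSpace.comap Z inferInstance)⟧ := by
    intro s hs
    have h1 := condDistrib_ae_eq_condExp (μ := μ) hZ hXtil hs
    have h2 := condDistrib_ae_eq_condExp (μ := μ) hZ hX hs
    refine h1.symm.trans (Filter.EventuallyEq.trans ?_ h2)
    filter_upwards [hlaw'] with ω hω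
    rw [hω]
  have hciXtil := (condIndepFun_iff_condExp_inter_preimage_eq_mul
    (m' := MeasurableSpace.comap Z inferInstance) (hm' := hZle) (μ := μ) hXtil (hX.prodMk hY)).mp hcondindep
  have hnXY := (condIndepFun_iff_condExp_inter_preimage_eq_mul
    (m' := MeasurableSpace.comap Z inferInstance) (hm' := hZle) (μ := μ) hX hY).mp hnull
  -- key integration lemma
  have hkey : ∀ (A B : Set Ω), MeasurableSet A → MeasurableSet B →
      ((μ⟦A | (MeasurableSpace.comap Z inferInstance)⟧) =ᵐ[μ] μ⟦B | (MeasurableSpace.comap Z inferInstance)⟧) → ∀ u : Set 𝒵, MeasurableSet u →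
      μ (A ∩ Z ⁻¹' u) = μ (B ∩ Z ⁻¹' u) := by
    intro A B hA hB hAB u hu
    have hu' : MeasurableSet[(MeasurableSpace.comap Z inferInstance)] (Z ⁻¹' u) := ⟨u, hu, rfl⟩
    have hint : ∀ (C : Set Ω), MeasurableSet C →
        ∫ x in Z ⁻¹' u, (μ⟦C | (MeasurableSpace.comap Z inferInstance)⟧) x ∂μ = (μ (C ∩ Z ⁻¹' u)).toReal := by
      intro C hC
      rw [setIntegral_condExp hZle ((integrable_const (1 : ℝ)).indicator hC) hu',
        integral_indicator_const (1 : ℝ) hC, measureReal_def, Measure.restrict_apply hC, smul_eq_mul, mul_one]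
    have h1 : ∫ x in Z ⁻¹' u, (μ⟦A | (MeasurableSpace.comap Z inferInstance)⟧) x ∂μ = ∫ x in Z ⁻¹' u, (μ⟦B | (MeasurableSpace.comap Z inferInstance)⟧) x ∂μ :=
      integral_congr_ae (ae_restrict_of_ae hAB)
    rw [hint A hA, hint B hB] at h1
    exact (ENNReal.toReal_eq_toReal_iff' (measure_ne_top μ _) (measure_ne_top μ _)).mp h1
  -- preimage identity for the pair map
  have hpre : ∀ (s : Set 𝒳) (t : Set 𝒴),
      (fun ω => (X ω, Y ω)) ⁻¹' (s ×ˢ t) = X ⁻¹' s ∩ Y ⁻¹' t := by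
    intro s t; ext ω; simp [Set.mem_prod]
  -- part 1 a.e. identity
  have hA1 : ∀ (s : Set 𝒳) (t : Set 𝒴), MeasurableSet s → MeasurableSet t →
      (μ⟦Xtil ⁻¹' s ∩ Y ⁻¹' t | (MeasurableSpace.comap Z inferInstance)⟧) =ᵐ[μ] μ⟦X ⁻¹' s ∩ Y ⁻¹' t | (MeasurableSpace.comap Z inferInstance)⟧ := by
    intro s t hs ht
    have h1 := hciXtil s (Set.univ ×ˢ t) hs (MeasurableSet.univ.prod ht)
    have hYt : (fun ω => (X ω, Y ω)) ⁻¹' (Set.univ ×ˢ t) = Y ⁻¹' t := by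
      ext ω; simp
    rw [hYt] at h1
    refine h1.trans (Filter.EventuallyEq.trans ?_ (hnXY s t hs ht).symm)
    exact (hswap s hs).mul (Filter.EventuallyEq.refl _ _)
  -- part 2 a.e. identity
  have hA2 : ∀ (s s' : Set 𝒳) (t : Set 𝒴), MeasurableSet s → MeasurableSet s' →
      MeasurableSet t →
      (μ⟦X ⁻¹' s ∩ (Xtil ⁻¹' s' ∩ Y ⁻¹' t) | (MeasurableSpace.comap Z inferInstance)⟧) =ᵐ[μ]
        μ⟦Xtil ⁻¹' s ∩ (X ⁻¹' s' ∩ Y ⁻¹' t) | (MeasurableSpace.comap Z inferInstance)⟧ := by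
    intro s s' t hs hs' ht
    have key : ∀ (a b : Set 𝒳), MeasurableSet a → MeasurableSet b →
        (μ⟦X ⁻¹' a ∩ (Xtil ⁻¹' b ∩ Y ⁻¹' t) | (MeasurableSpace.comap Z inferInstance)⟧) =ᵐ[μ]
          fun ω => (condDistrib X Z μ (Z ω) a).toReal *
            ((condDistrib X Z μ (Z ω) b).toReal * (μ⟦Y ⁻¹' t | (MeasurableSpace.comap Z inferInstance)⟧) ω) := by
      intro a b ha hb
      have hrearr : X ⁻¹' a ∩ (Xtil ⁻¹' b ∩ Y ⁻¹' t)
          = Xtil ⁻¹' b ∩ (fun ω => (X ω, Y ω)) ⁻¹' (a ×ˢ t) := by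
        rw [hpre]; ext ω; simp; tauto
      have h1 := hciXtil b (a ×ˢ t) hb (ha.prod ht)
      rw [← hrearr] at h1
      have h2 := hnXY a t ha ht
      rw [hpre] at h1
      have h3 := condDistrib_ae_eq_condExp (μ := μ) hZ hX ha
      have h4 := condDistrib_ae_eq_condExp (μ := μ) hZ hX hb
      have h5 : (μ⟦Xtil ⁻¹' b | (MeasurableSpace.comap Z inferInstance)⟧) =ᵐ[μ]
          fun ω => (condDistrib X Z μ (Z ω) b).toReal := (hswap b hb).trans h4.symm
      filter_upwards [h1, h2, h3, h5] with ω h1 h2 h3 h5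
      rw [h1, h2, h5, ← h3]
      rw [measureReal_def]
      ring
    have k2 := key s' s hs' hs
    rw [show X ⁻¹' s' ∩ (Xtil ⁻¹' s ∩ Y ⁻¹' t) = Xtil ⁻¹' s ∩ (X ⁻¹' s' ∩ Y ⁻¹' t) from by
      ext ω; simp; tauto] at k2
    refine (key s s' hs hs').trans (Filter.EventuallyEq.trans ?_ k2.symm)
    filter_upwards with ω
    ring
  -- measurability of the tuple maps
  have hf1 : Measurable fun ω => (Xtil ω, Y ω, Z ω) := hXtil.prodMk (hY.prodMk hZ)
  have hf2 : Measurable fun ω => (X ω, Y ω, Z ω) := hX.prodMk (hY.prodMk hZ)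
  have hg1 : Measurable fun ω => (X ω, Xtil ω, Y ω, Z ω) :=
    hX.prodMk (hXtil.prodMk (hY.prodMk hZ))
  have hg2 : Measurable fun ω => (Xtil ω, X ω, Y ω, Z ω) :=
    hXtil.prodMk (hX.prodMk (hY.prodMk hZ))
  haveI := Measure.isProbabilityMeasure_map (μ := μ) hf1.aemeasurable
  haveI := Measure.isProbabilityMeasure_map (μ := μ) hf2.aemeasurable
  haveI := Measure.isProbabilityMeasure_map (μ := μ) hg1.aemeasurable
  haveI := Measure.isProbabilityMeasure_map (μ := μ) hg2.aemeasurable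
  -- generating π-systems
  have hgenYZ : MeasurableSpace.generateFrom
      (Set.image2 (· ×ˢ ·) { t : Set 𝒴 | MeasurableSet t } { u : Set 𝒵 | MeasurableSet u })
      = Prod.instMeasurableSpace := generateFrom_prod
  have hcsYZ : IsCountablySpanning
      (Set.image2 (· ×ˢ ·) { t : Set 𝒴 | MeasurableSet t } { u : Set 𝒵 | MeasurableSet u }) :=
    isCountablySpanning_measurableSet.prod isCountablySpanning_measurableSet
  have hgen3 : MeasurableSpace.generateFrom
      (Set.image2 (· ×ˢ ·) { s : Set 𝒳 | MeasurableSet s }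
        (Set.image2 (· ×ˢ ·) { t : Set 𝒴 | MeasurableSet t } { u : Set 𝒵 | MeasurableSet u }))
      = Prod.instMeasurableSpace :=
    generateFrom_eq_prod MeasurableSpace.generateFrom_measurableSet hgenYZ
      isCountablySpanning_measurableSet hcsYZ
  have hcs3 : IsCountablySpanning
      (Set.image2 (· ×ˢ ·) { s : Set 𝒳 | MeasurableSet s }
        (Set.image2 (· ×ˢ ·) { t : Set 𝒴 | MeasurableSet t } { u : Set 𝒵 | MeasurableSet u })) :=
    isCountablySpanning_measurableSet.prod hcsYZ
  have hgen4 : MeasurableSpace.generateFrom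
      (Set.image2 (· ×ˢ ·) { s : Set 𝒳 | MeasurableSet s }
        (Set.image2 (· ×ˢ ·) { s : Set 𝒳 | MeasurableSet s }
          (Set.image2 (· ×ˢ ·) { t : Set 𝒴 | MeasurableSet t } { u : Set 𝒵 | MeasurableSet u })))
      = Prod.instMeasurableSpace :=
    generateFrom_eq_prod MeasurableSpace.generateFrom_measurableSet hgen3
      isCountablySpanning_measurableSet hcs3
  constructor
  · refine ext_of_generate_finite _ hgen3.symm
      (MeasurableSpace.isPiSystem_measurableSet.prod isPiSystem_prod) ?_ ?_
    · rintro _ ⟨s, hs, _, ⟨t, ht, u, hu, rfl⟩, rfl⟩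
      have hstu : MeasurableSet (s ×ˢ t ×ˢ u) := hs.prod (ht.prod hu)
      rw [Measure.map_apply hf1 hstu, Measure.map_apply hf2 hstu]
      have e1 : (fun ω => (Xtil ω, Y ω, Z ω)) ⁻¹' (s ×ˢ t ×ˢ u)
          = (Xtil ⁻¹' s ∩ Y ⁻¹' t) ∩ Z ⁻¹' u := by
        ext ω; simp [Set.mem_prod]; tauto
      have e2 : (fun ω => (X ω, Y ω, Z ω)) ⁻¹' (s ×ˢ t ×ˢ u)
          = (X ⁻¹' s ∩ Y ⁻¹' t) ∩ Z ⁻¹' u := by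
        ext ω; simp [Set.mem_prod]; tauto
      rw [e1, e2]
      exact hkey _ _ ((hXtil hs).inter (hY ht)) ((hX hs).inter (hY ht))
        (hA1 s t hs ht) u hu
    · rw [Measure.map_apply hf1 MeasurableSet.univ, Measure.map_apply hf2 MeasurableSet.univ]
      simp
  · refine ext_of_generate_finite _ hgen4.symm
      (MeasurableSpace.isPiSystem_measurableSet.prod (MeasurableSpace.isPiSystem_measurableSet.prod isPiSystem_prod)) ?_ ?_
    · rintro _ ⟨s, hs, _, ⟨s', hs', _, ⟨t, ht, u, hu, rfl⟩, rfl⟩, rfl⟩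
      have hstu : MeasurableSet (s ×ˢ s' ×ˢ t ×ˢ u) := hs.prod (hs'.prod (ht.prod hu))
      rw [Measure.map_apply hg1 hstu, Measure.map_apply hg2 hstu]
      have e1 : (fun ω => (X ω, Xtil ω, Y ω, Z ω)) ⁻¹' (s ×ˢ s' ×ˢ t ×ˢ u)
          = (X ⁻¹' s ∩ (Xtil ⁻¹' s' ∩ Y ⁻¹' t)) ∩ Z ⁻¹' u := by
        ext ω; simp [Set.mem_prod]; tauto
      have e2 : (fun ω => (Xtil ω, X ω, Y ω, Z ω)) ⁻¹' (s ×ˢ s' ×ˢ t ×ˢ u)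
          = (Xtil ⁻¹' s ∩ (X ⁻¹' s' ∩ Y ⁻¹' t)) ∩ Z ⁻¹' u := by
        ext ω; simp [Set.mem_prod]; tauto
      rw [e1, e2]
      exact hkey _ _ ((hX hs).inter ((hXtil hs').inter (hY ht)))
        ((hXtil hs).inter ((hX hs').inter (hY ht)))
        (hA2 s s' t hs hs' ht) u hu
    · rw [Measure.map_apply hg1 MeasurableSet.univ, Measure.map_apply hg2 MeasurableSet.univ]
      simp
end
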